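/- Let a,b,c,d ∈ ℂ. The coefficients of the conic C(x,y,z) = c₂₀₀x² + c₀₂₀y² + c₁₁₀xy + c₁₀₁xz + c₀₁₁yz with c₂₀₀ = -2(ad-bc)(bc+ad)(ac+bd)(a²+b²-c²-d²), c₀₂₀ = -(bc+ad)(ab-cd)(a²+b²-c²-d²)(a²-b²+c²-d²), c₁₁₀ = -(bc+ad)(a²+b²-c²-d²)(a³c-3ab²c+ac³+3a²bd-b³d+3bc²d-3acd²-bd³), c₁₀₁ = -4(ad-bc)(bc+ad)(ac-bd)(ac+bd), c₀₁₁ = (ac-bd)(ab-cd)(a²+b²-c²-d²)(a²-b²+c²-d²), satisfy C(q₁₃) = 0, C(q₁₄) = 0, C(q₂₅) = 0, C(q₂₆) = 0, and C(q₅₆) = 0, where q₁₃ = (-2ab+2cd, 2ac+2bd, 0), q₁₄ = (a²+b²-c²-d², -2bc-2ad, 2ac-2bd), q₂₅ = (0, -2ac+2bd, -2bc-2ad), q₂₆ = (0, 0, a²+b²+c²+d²), q₅₆ = (2ac-2bd, 0, -a²-b²+c²+d²). -/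

import Mathlib

/-- The conic through the five points `q₁₃, q₁₄, q₂₅, q₂₆, q₅₆`. -/
def ConicC (a b c d x y z : ℂ) : ℂ :=
  (-2*(a*d - b*c)*(b*c + a*d)*(a*c + b*d)*(a^2 + b^2 - c^2 - d^2)) * x^2
    + (-(b*c + a*d)*(a*b - c*d)*(a^2 + b^2 - c^2 - d^2)*(a^2 - b^2 + c^2 - d^2)) * y^2
    + (-(b*c + a*d)*(a^2 + b^2 - c^2 - d^2)
        *(a^3*c - 3*a*b^2*c + a*c^3 + 3*a^2*b*d - b^3*d + 3*b*c^2*d - 3*a*c*d^2 - b*d^3)) * (x*y)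
    + (-4*(a*d - b*c)*(b*c + a*d)*(a*c - b*d)*(a*c + b*d)) * (x*z)
    + ((a*c - b*d)*(a*b - c*d)*(a^2 + b^2 - c^2 - d^2)*(a^2 - b^2 + c^2 - d^2)) * (y*z)

theorem conic_through_five_points (a b c d : ℂ) :
    ConicC a b c d (-2*a*b + 2*c*d) (2*a*c + 2*b*d) 0 = 0
      ∧ ConicC a b c d (a^2 + b^2 - c^2 - d^2) (-2*b*c - 2*a*d) (2*a*c - 2*b*d) = 0
      ∧ ConicC a b c d 0 (-2*a*c + 2*b*d) (-2*b*c - 2*a*d) = 0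
      ∧ ConicC a b c d 0 0 (a^2 + b^2 + c^2 + d^2) = 0
      ∧ ConicC a b c d (2*a*c - 2*b*d) 0 (-a^2 - b^2 + c^2 + d^2) = 0 := by
  unfold ConicC
  exact ⟨by ring, by ring, by ring, by ring, by ring⟩
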